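/- arXiv:2506.15541 — 3 statements merged into one kernel-verified Lean document; each statement's English description precedes it below -/
import Mathlib

section
/- Let α, C > 0 and let f : (0,1]² → ℝ be integrable and mixed α-Hölder with constant C with respect to the dyadic metrics. Then for all j, j' ∈ ℕ and all (x,x') ∈ (0,1]², the mixed martingale difference satisfies |(Δ_j Δ'_{j'} f)(x,x')| = |(P^{j+1}P'^{j'+1}f − P^{j}P'^{j'+1}f − P^{j+1}P'^{j'}f + P^{j}P'^{j'}f)(x,x')| ≤ C · 2^{-αj} · 2^{-αj'}. -/
open MeasureTheory Set Filter

/-- The index `k` of the scale-`j` dyadic interval `(2^{-j} k, 2^{-j}(k+1)]` containing `x`. -/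
noncomputable def dyadicIndex (j : ℕ) (x : ℝ) : ℤ := ⌈(2:ℝ) ^ j * x⌉ - 1

/-- The scale-`j` dyadic interval `I^j_k = (2^{-j} k, 2^{-j}(k+1)]`. -/
noncomputable def dyadicInterval (j : ℕ) (k : ℤ) : Set ℝ :=
  Set.Ioc ((2:ℝ) ^ (-(j:ℤ)) * k) ((2:ℝ) ^ (-(j:ℤ)) * (k + 1))

/-- The dyadic averaging operator `P^j`:  `(P^j f)(x) = 2^j ∫_{I^j_k} f`, where `I^j_k` is the
scale-`j` dyadic interval containing `x`. -/
noncomputable def dyadicAvg (j : ℕ) (f : ℝ → ℝ) (x : ℝ) : ℝ :=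
  (2:ℝ) ^ j * ∫ t in dyadicInterval j (dyadicIndex j x), f t

/-- The dyadic metric on `(0,1]`:
`d(x,y) = inf { 2^{-j} : x and y lie in the same scale-j dyadic interval }` for `x ≠ y`,
and `d(x,x) = 0`. -/
noncomputable def dyadicDist (x y : ℝ) : ℝ :=
  if x = y then 0
  else sInf {r : ℝ | ∃ j : ℕ, r = (2:ℝ) ^ (-(j:ℤ)) ∧ dyadicIndex j x = dyadicIndex j y}

/-- `f` is `α`-Hölder with constant `C` on `(0,1]` with respect to the dyadic metric. -/
def HolderDyadic (α C : ℝ) (f : ℝ → ℝ) : Prop :=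
  ∀ x ∈ Set.Ioc (0:ℝ) 1, ∀ y ∈ Set.Ioc (0:ℝ) 1, |f x - f y| ≤ C * dyadicDist x y ^ α

/-- `g` is mixed `α`-Hölder with constant `C` on `(0,1]²` with respect to the dyadic metrics. -/
def MixedHolderDyadic (α C : ℝ) (g : ℝ → ℝ → ℝ) : Prop :=
  ∀ x ∈ Set.Ioc (0:ℝ) 1, ∀ y ∈ Set.Ioc (0:ℝ) 1, ∀ x' ∈ Set.Ioc (0:ℝ) 1, ∀ y' ∈ Set.Ioc (0:ℝ) 1,
    |g y x' - g x x'| ≤ C * dyadicDist x y ^ α ∧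
    |g x y' - g x x'| ≤ C * dyadicDist x' y' ^ α ∧
    |g y y' - g x y' - g y x' + g x x'| ≤ C * (dyadicDist x y ^ α * dyadicDist x' y' ^ α)

/-- Dyadic averaging at scale `j` in the first variable. -/
noncomputable def avgFst (j : ℕ) (g : ℝ → ℝ → ℝ) (x x' : ℝ) : ℝ := dyadicAvg j (fun t => g t x') x

/-- Dyadic averaging at scale `j'` in the second variable. -/
noncomputable def avgSnd (j' : ℕ) (g : ℝ → ℝ → ℝ) (x x' : ℝ) : ℝ := dyadicAvg j' (fun t => g x t) x'

/-- The double averaging operator `P^j P'^{j'}`. -/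
noncomputable def avg2 (j j' : ℕ) (g : ℝ → ℝ → ℝ) : ℝ → ℝ → ℝ := avgFst j (avgSnd j' g)

/-- The mixed martingale difference `Δ_j Δ'_{j'} g`. -/
noncomputable def mixedDiff (j j' : ℕ) (g : ℝ → ℝ → ℝ) (x x' : ℝ) : ℝ :=
  avg2 (j+1) (j'+1) g x x' - avg2 j (j'+1) g x x' - avg2 (j+1) j' g x x' + avg2 j j' g x x'

/-- `Δ_j P'^{j'} g`: martingale difference in the first variable, average in the second. -/
noncomputable def diffFstAvgSnd (j j' : ℕ) (g : ℝ → ℝ → ℝ) (x x' : ℝ) : ℝ :=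
  avg2 (j+1) j' g x x' - avg2 j j' g x x'

/-- `P^j Δ'_{j'} g`: average in the first variable, martingale difference in the second. -/
noncomputable def avgFstDiffSnd (j j' : ℕ) (g : ℝ → ℝ → ℝ) (x x' : ℝ) : ℝ :=
  avg2 j (j'+1) g x x' - avg2 j j' g x x'

/-- The (unnormalized) Haar function `ψ^j_k`: `+1` on the right half of `I^j_k`, `-1` on its
left half, `0` elsewhere. -/
noncomputable def haarFn (j : ℕ) (k : ℤ) (x : ℝ) : ℝ :=
  if x ∈ Set.Ioc ((2:ℝ) ^ (-(j:ℤ)) * k + (2:ℝ) ^ (-(j:ℤ) - 1)) ((2:ℝ) ^ (-(j:ℤ)) * (k + 1)) then 1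
  else if x ∈ Set.Ioc ((2:ℝ) ^ (-(j:ℤ)) * k) ((2:ℝ) ^ (-(j:ℤ)) * k + (2:ℝ) ^ (-(j:ℤ) - 1)) then -1
  else 0

/-!
`P^{j+1} g - P^j g` is the difference between the averages of `g` over a dyadic interval and
over one of its children, and for any two probability measures `|∫ g dν - ∫ g dμ|` is bounded by
the oscillation `|g t - g s|` over `s ~ μ`, `t ~ ν`. Apply this in the first variable to
`u = Δ'_{j'} f(·, x')`: the oscillation `u t - u s` is `Δ'_{j'}` applied to `f(t, ·) - f(s, ·)`, and
applying the estimate once more in the second variable leaves the rectangle increments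
`f(t,t') - f(s,t') - f(t,s') + f(s,s')` with `s, t` in one scale-`j` interval and `s', t'` in one
scale-`j'` interval. Such points are at dyadic distance at most `2^{-j}` resp. `2^{-j'}`, so the
mixed Hölder condition bounds these increments by `C 2^{-αj} 2^{-αj'}`.
-/

section Oscillation

variable {Ω : Type*} [MeasurableSpace Ω] {μ ν : Measure Ω} {g : Ω → ℝ} {c M : ℝ}

theorem abs_integral_sub_le_of_ae_abs_sub_le [IsProbabilityMeasure μ] (hg : Integrable g μ)
    (h : ∀ᵐ s ∂μ, |g s - c| ≤ M) : |∫ s, g s ∂μ - c| ≤ M := by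
  have hsub : ∫ s, g s ∂μ - c = ∫ s, (g s - c) ∂μ := by
    rw [integral_sub hg (integrable_const c), integral_const, probReal_univ, one_smul]
  have hnorm := norm_integral_le_of_norm_le_const (C := M) (f := fun s => g s - c)
    (h.mono fun s hs => by rwa [Real.norm_eq_abs])
  rwa [probReal_univ, mul_one, Real.norm_eq_abs, ← hsub] at hnorm

theorem abs_average_sub_average_le_of_ae_abs_sub_le [IsFiniteMeasure μ] [NeZero μ]
    [IsFiniteMeasure ν] [NeZero ν] (hμ : Integrable g μ) (hν : Integrable g ν)
    (h : ∀ᵐ s ∂μ, ∀ᵐ t ∂ν, |g t - g s| ≤ M) :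
    |⨍ t, g t ∂ν - ⨍ s, g s ∂μ| ≤ M := by
  rw [average_eq', average_eq', abs_sub_comm]
  refine abs_integral_sub_le_of_ae_abs_sub_le hμ.to_average (Measure.ae_smul_measure ?_ _)
  filter_upwards [h] with s hs
  rw [abs_sub_comm]
  exact abs_integral_sub_le_of_ae_abs_sub_le hν.to_average (Measure.ae_smul_measure hs _)

end Oscillation

section Fubini

variable {α β : Type*} [MeasurableSpace α] [MeasurableSpace β] {μ : Measure α} {ν : Measure β}
  [SFinite μ] [SFinite ν] {f : α → β → ℝ} {A : Set α} {B : Set β}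

theorem MeasureTheory.IntegrableOn.integrableOn_setIntegral_right
    (h : IntegrableOn (Function.uncurry f) (A ×ˢ B) (μ.prod ν)) :
    IntegrableOn (fun a => ∫ b in B, f a b ∂ν) A μ := by
  rw [IntegrableOn, ← Measure.prod_restrict] at h
  exact h.integral_prod_left

theorem MeasureTheory.IntegrableOn.ae_integrableOn_right
    (h : IntegrableOn (Function.uncurry f) (A ×ˢ B) (μ.prod ν)) :
    ∀ᵐ a ∂μ.restrict A, IntegrableOn (f a) B ν := by
  rw [IntegrableOn, ← Measure.prod_restrict] at h
  exact h.prod_right_ae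

end Fubini

noncomputable def dyadicCell (j : ℕ) (x : ℝ) : Set ℝ := dyadicInterval j (dyadicIndex j x)

noncomputable def dyadicDiff (j : ℕ) (g : ℝ → ℝ) (x : ℝ) : ℝ :=
  dyadicAvg (j + 1) g x - dyadicAvg j g x

section DyadicCells

variable {j : ℕ} {k : ℤ} {x s t : ℝ}

theorem dyadicInterval_eq_Ioc_div (j : ℕ) (k : ℤ) :
    dyadicInterval j k = Ioc ((k : ℝ) / 2 ^ j) ((k + 1) / 2 ^ j) := by
  simp only [dyadicInterval, zpow_neg, zpow_natCast, inv_mul_eq_div]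

theorem mem_dyadicInterval_iff : t ∈ dyadicInterval j k ↔ dyadicIndex j t = k := by
  rw [dyadicInterval_eq_Ioc_div, mem_Ioc, div_lt_iff₀' (by positivity),
    le_div_iff₀' (by positivity), dyadicIndex, sub_eq_iff_eq_add, Int.ceil_eq_iff]
  push_cast
  constructor <;> rintro ⟨h₁, h₂⟩ <;> constructor <;> linarith

theorem mem_dyadicCell_iff : t ∈ dyadicCell j x ↔ dyadicIndex j t = dyadicIndex j x :=
  mem_dyadicInterval_iff

theorem mem_dyadicCell_self (j : ℕ) (x : ℝ) : x ∈ dyadicCell j x :=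
  mem_dyadicCell_iff.2 rfl

theorem measurableSet_dyadicCell (j : ℕ) (x : ℝ) : MeasurableSet (dyadicCell j x) :=
  measurableSet_Ioc

theorem dyadicInterval_succ_subset (j : ℕ) (k : ℤ) :
    dyadicInterval (j + 1) k ⊆ dyadicInterval j (k / 2) := by
  have h₁ : (2 * (k / 2 : ℤ) : ℝ) ≤ k := by exact_mod_cast (by omega : 2 * (k / 2) ≤ k)
  have h₂ : (k + 1 : ℝ) ≤ 2 * ((k / 2 : ℤ) + 1) := by
    exact_mod_cast (by omega : k + 1 ≤ 2 * (k / 2 + 1))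
  rw [dyadicInterval_eq_Ioc_div, dyadicInterval_eq_Ioc_div, pow_succ, mul_comm, ← div_div,
    ← div_div]
  apply Ioc_subset_Ioc <;> gcongr <;> linarith

theorem dyadicCell_succ_subset (j : ℕ) (x : ℝ) : dyadicCell (j + 1) x ⊆ dyadicCell j x := by
  have hsub := dyadicInterval_succ_subset j (dyadicIndex (j + 1) x)
  have hx : dyadicIndex j x = dyadicIndex (j + 1) x / 2 :=
    mem_dyadicInterval_iff.1 (hsub (mem_dyadicCell_self _ _))
  rwa [dyadicCell, dyadicCell, hx]

theorem dyadicCell_subset_Ioc (hx : x ∈ Ioc 0 1) (j : ℕ) : dyadicCell j x ⊆ Ioc 0 1 := by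
  have hcell : dyadicCell 0 x = Ioc 0 1 := by
    have hx₀ : dyadicIndex 0 x = 0 := mem_dyadicInterval_iff.1 (by simpa [dyadicInterval] using hx)
    simp [dyadicCell, dyadicInterval, hx₀]
  rw [← hcell]
  exact antitone_nat_of_succ_le (f := fun n => dyadicCell n x)
    (fun n => dyadicCell_succ_subset n x) (Nat.zero_le j)

theorem measureReal_dyadicCell (j : ℕ) (x : ℝ) : volume.real (dyadicCell j x) = (2 ^ j)⁻¹ := by
  rw [dyadicCell, dyadicInterval_eq_Ioc_div, Real.volume_real_Ioc_of_le (by gcongr; linarith)]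
  ring

instance (j : ℕ) (x : ℝ) : IsFiniteMeasure (volume.restrict (dyadicCell j x)) :=
  Real.isFiniteMeasure_restrict_Ioc _ _

instance (j : ℕ) (x : ℝ) : NeZero (volume.restrict (dyadicCell j x)) :=
  ⟨fun h => by
    simpa [Measure.real, Measure.restrict_eq_zero.1 h] using (measureReal_dyadicCell j x).symm⟩

theorem dyadicAvg_eq_setAverage (j : ℕ) (g : ℝ → ℝ) (x : ℝ) :
    dyadicAvg j g x = ⨍ t in dyadicCell j x, g t := by
  rw [setAverage_eq, measureReal_dyadicCell, inv_inv, smul_eq_mul]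
  rfl

theorem dyadicDist_nonneg (s t : ℝ) : 0 ≤ dyadicDist s t := by
  unfold dyadicDist
  split_ifs
  · exact le_rfl
  · exact Real.sInf_nonneg (by rintro r ⟨i, rfl, -⟩; positivity)

theorem dyadicDist_le_of_dyadicIndex_eq (h : dyadicIndex j s = dyadicIndex j t) :
    dyadicDist s t ≤ 2 ^ (-(j : ℤ)) := by
  unfold dyadicDist
  split_ifs
  · positivity
  · exact csInf_le ⟨0, by rintro r ⟨i, rfl, -⟩; positivity⟩ ⟨j, rfl, h⟩

theorem dyadicDist_rpow_le {α : ℝ} (hα : 0 ≤ α) (hs : s ∈ dyadicCell j x)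
    (ht : t ∈ dyadicCell j x) : dyadicDist s t ^ α ≤ 2 ^ (-(α * j)) := by
  have hdist := dyadicDist_le_of_dyadicIndex_eq
    ((mem_dyadicCell_iff.1 hs).trans (mem_dyadicCell_iff.1 ht).symm)
  calc dyadicDist s t ^ α ≤ ((2 : ℝ) ^ (-(j : ℤ))) ^ α :=
        Real.rpow_le_rpow (dyadicDist_nonneg s t) hdist hα
    _ = 2 ^ (-(α * j)) := by
        rw [← Real.rpow_intCast, ← Real.rpow_mul zero_le_two]
        push_cast
        ring_nf

end DyadicCells

section DyadicDiff

variable {j j' : ℕ} {x x' : ℝ} {a b g : ℝ → ℝ} {f : ℝ → ℝ → ℝ} {A : Set ℝ} {M : ℝ}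

theorem dyadicAvg_sub (ha : IntegrableOn a (dyadicCell j x))
    (hb : IntegrableOn b (dyadicCell j x)) :
    dyadicAvg j (fun t => a t - b t) x = dyadicAvg j a x - dyadicAvg j b x :=
  (congrArg ((2 : ℝ) ^ j * ·) (integral_sub ha hb)).trans (mul_sub _ _ _)

theorem dyadicDiff_sub (ha : IntegrableOn a (dyadicCell j x))
    (hb : IntegrableOn b (dyadicCell j x)) :
    dyadicDiff j (fun t => a t - b t) x = dyadicDiff j a x - dyadicDiff j b x := by
  have hsub := dyadicCell_succ_subset j x
  rw [dyadicDiff, dyadicDiff, dyadicDiff, dyadicAvg_sub ha hb,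
    dyadicAvg_sub (ha.mono_set hsub) (hb.mono_set hsub)]
  ring

theorem abs_dyadicDiff_le (hg : IntegrableOn g (dyadicCell j x))
    (h : ∀ᵐ s ∂volume.restrict (dyadicCell j x), ∀ᵐ t ∂volume.restrict (dyadicCell (j + 1) x),
      |g t - g s| ≤ M) :
    |dyadicDiff j g x| ≤ M := by
  rw [dyadicDiff, dyadicAvg_eq_setAverage, dyadicAvg_eq_setAverage]
  exact abs_average_sub_average_le_of_ae_abs_sub_le hg
    (hg.mono_set (dyadicCell_succ_subset j x)) h

theorem integrableOn_dyadicAvg_right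
    (h : IntegrableOn (Function.uncurry f) (A ×ˢ dyadicCell j' x')) :
    IntegrableOn (fun t => dyadicAvg j' (f t) x') A :=
  h.integrableOn_setIntegral_right.const_mul _

theorem integrableOn_dyadicDiff_right
    (h : IntegrableOn (Function.uncurry f) (A ×ˢ dyadicCell j' x')) :
    IntegrableOn (fun t => dyadicDiff j' (f t) x') A :=
  (integrableOn_dyadicAvg_right
    (h.mono_set (prod_mono subset_rfl (dyadicCell_succ_subset j' x')))).sub
    (integrableOn_dyadicAvg_right h)

theorem mixedDiff_eq_dyadicDiff
    (h : IntegrableOn (Function.uncurry f) (dyadicCell j x ×ˢ dyadicCell j' x')) :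
    mixedDiff j j' f x x' = dyadicDiff j (fun t => dyadicDiff j' (f t) x') x := by
  change _ = dyadicDiff j (fun t => dyadicAvg (j' + 1) (f t) x' - dyadicAvg j' (f t) x') x
  have hsucc := h.mono_set (prod_mono subset_rfl (dyadicCell_succ_subset j' x'))
  rw [dyadicDiff_sub (integrableOn_dyadicAvg_right hsucc) (integrableOn_dyadicAvg_right h)]
  simp only [mixedDiff, dyadicDiff, avg2, avgFst, avgSnd]
  ring

end DyadicDiff

theorem MixedHolderDyadic.abs_sub_sub_add_le {α C : ℝ} {f : ℝ → ℝ → ℝ}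
    (hf : MixedHolderDyadic α C f) (hα : 0 ≤ α) (hC : 0 ≤ C) {j j' : ℕ} {x x' s t s' t' : ℝ}
    (hx : x ∈ Ioc 0 1) (hx' : x' ∈ Ioc 0 1) (hs : s ∈ dyadicCell j x) (ht : t ∈ dyadicCell j x)
    (hs' : s' ∈ dyadicCell j' x') (ht' : t' ∈ dyadicCell j' x') :
    |f t t' - f s t' - f t s' + f s s'| ≤ C * 2 ^ (-(α * j)) * 2 ^ (-(α * j')) := by
  have hsub := dyadicCell_subset_Ioc hx j
  have hsub' := dyadicCell_subset_Ioc hx' j'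
  calc |f t t' - f s t' - f t s' + f s s'|
      ≤ C * (dyadicDist s t ^ α * dyadicDist s' t' ^ α) :=
        (hf s (hsub hs) t (hsub ht) s' (hsub' hs') t' (hsub' ht')).2.2
    _ ≤ C * (2 ^ (-(α * j)) * 2 ^ (-(α * j'))) := by
        refine mul_le_mul_of_nonneg_left (mul_le_mul (dyadicDist_rpow_le hα hs ht)
          (dyadicDist_rpow_le hα hs' ht') (Real.rpow_nonneg (dyadicDist_nonneg s' t') α)
          (by positivity)) hC
    _ = C * 2 ^ (-(α * j)) * 2 ^ (-(α * j')) := by ring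

/-- For `f` integrable and mixed `α`-Hölder with constant `C`, the mixed
martingale difference satisfies `|(Δ_j Δ'_{j'} f)(x,x')| ≤ C 2^{-αj} 2^{-αj'}`. -/
theorem mixedDiff_bound
    (α C : ℝ) (hα : 0 < α) (hC : 0 < C)
    (f : ℝ → ℝ → ℝ)
    (hint : MeasureTheory.IntegrableOn (Function.uncurry f)
      (Set.Ioc (0:ℝ) 1 ×ˢ Set.Ioc (0:ℝ) 1))
    (hf : MixedHolderDyadic α C f)
    (j j' : ℕ) (x x' : ℝ) (hx : x ∈ Set.Ioc (0:ℝ) 1) (hx' : x' ∈ Set.Ioc (0:ℝ) 1) :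
    |mixedDiff j j' f x x'| ≤ C * (2:ℝ) ^ (-(α * (j:ℝ))) * (2:ℝ) ^ (-(α * (j':ℝ))) := by
  have hcell : IntegrableOn (Function.uncurry f) (dyadicCell j x ×ˢ dyadicCell j' x') :=
    hint.mono_set (prod_mono (dyadicCell_subset_Ioc hx j) (dyadicCell_subset_Ioc hx' j'))
  -- Fubini gives integrable slices `f t` only for almost every `t`, hence a.e. bounds below.
  have hslices := hcell.ae_integrableOn_right
  rw [mixedDiff_eq_dyadicDiff hcell]
  refine abs_dyadicDiff_le (integrableOn_dyadicDiff_right hcell) ?_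
  filter_upwards [hslices, ae_restrict_mem (measurableSet_dyadicCell j x)] with s hs_int hs
  filter_upwards [ae_restrict_of_ae_restrict_of_subset (dyadicCell_succ_subset j x) hslices,
    ae_restrict_mem (measurableSet_dyadicCell (j + 1) x)] with t ht_int ht
  rw [← dyadicDiff_sub ht_int hs_int]
  refine abs_dyadicDiff_le (ht_int.sub hs_int)
    (ae_restrict_of_forall_mem (measurableSet_dyadicCell j' x') fun s' hs' =>
      ae_restrict_of_forall_mem (measurableSet_dyadicCell (j' + 1) x') fun t' ht' => ?_)
  rw [show f t t' - f s t' - (f t s' - f s s') = f t t' - f s t' - f t s' + f s s' by ring]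
  exact hf.abs_sub_sub_add_le hα.le hC.le hx hx' hs (dyadicCell_succ_subset j x ht) hs'
    (dyadicCell_succ_subset j' x' ht')
end

section
/- Let α, C > 0, let f : (0,1]² → ℝ be mixed α-Hölder with constant C with respect to the dyadic metrics, and let A : ℝ → ℝ be twice continuously differentiable. Let M₁ = sup of |A'| and M₂ = sup of |A''| on the closed interval [inf f, sup f] (which is compact since a mixed α-Hölder function on (0,1]² is bounded). Then the composition A∘f is mixed α-Hölder with respect to the dyadic metrics with constant C' = max(M₁ C, M₁ C + 2 M₂ C²). -/
open MeasureTheory Set Filter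

/-!
Since `|f x x' - f 1 1| ≤ 3 C`, `f` takes values in the compact interval `[m, M] = [inf f, sup f]`,
on which `A` is `M₁`-Lipschitz and `A'` is `M₂`-Lipschitz; this gives the two one-variable bounds.
For the rectangular difference, the mean value theorem applied to
`t ↦ A (c + t (e - c)) - A (a + t (b - a))` writes `A e - A c - A b + A a` as
`A'(u) (e - c - b + a) + (A'(u) - A'(v)) (b - a)` with
`|u - v| ≤ |c - a| + |e - c - b + a| ≤ 2 C d(x', y')^α`, whence the constant `M₁ C + 2 M₂ C²`.
-/

lemma dyadicDist_nonneg_s9 (x y : ℝ) : 0 ≤ dyadicDist x y := by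
  unfold dyadicDist
  split
  · exact le_rfl
  · exact Real.sInf_nonneg (by rintro r ⟨j, rfl, -⟩; positivity)

lemma dyadicIndex_zero_of_mem_Ioc {x : ℝ} (hx : x ∈ Ioc (0 : ℝ) 1) : dyadicIndex 0 x = 0 := by
  simp only [dyadicIndex, pow_zero, one_mul, sub_eq_zero]
  exact Int.ceil_eq_iff.mpr ⟨by norm_num [hx.1], by exact_mod_cast hx.2⟩

lemma dyadicDist_le_one {x y : ℝ} (hx : x ∈ Ioc (0 : ℝ) 1) (hy : y ∈ Ioc (0 : ℝ) 1) :
    dyadicDist x y ≤ 1 := by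
  unfold dyadicDist
  split
  · exact zero_le_one
  · refine csInf_le ⟨0, by rintro r ⟨j, rfl, -⟩; positivity⟩ ⟨0, by norm_num, ?_⟩
    rw [dyadicIndex_zero_of_mem_Ioc hx, dyadicIndex_zero_of_mem_Ioc hy]

lemma dyadicDist_rpow_le_one {α x y : ℝ} (hα : 0 ≤ α) (hx : x ∈ Ioc (0 : ℝ) 1)
    (hy : y ∈ Ioc (0 : ℝ) 1) : dyadicDist x y ^ α ≤ 1 :=
  Real.rpow_le_one (dyadicDist_nonneg_s9 x y) (dyadicDist_le_one hx hy) hα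

section SecondDifference

variable {A : ℝ → ℝ} {s : Set ℝ} {M₁ M₂ : ℝ}

lemma exists_sub_sub_sub_add_eq_deriv (hA : Differentiable ℝ A) (a b c e : ℝ) :
    ∃ τ ∈ Ioo (0 : ℝ) 1, A e - A c - A b + A a =
      deriv A (c + τ * (e - c)) * (e - c) - deriv A (a + τ * (b - a)) * (b - a) := by
  have hderiv : ∀ t : ℝ, HasDerivAt (fun t => A (c + t * (e - c)) - A (a + t * (b - a)))
      (deriv A (c + t * (e - c)) * (e - c) - deriv A (a + t * (b - a)) * (b - a)) t := by
    intro t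
    have hce : HasDerivAt (fun t : ℝ => c + t * (e - c)) (e - c) t := by
      simpa using ((hasDerivAt_id t).mul_const (e - c)).const_add c
    have hab : HasDerivAt (fun t : ℝ => a + t * (b - a)) (b - a) t := by
      simpa using ((hasDerivAt_id t).mul_const (b - a)).const_add a
    exact ((hA _).hasDerivAt.comp t hce).sub ((hA _).hasDerivAt.comp t hab)
  obtain ⟨τ, hτ, hslope⟩ := exists_hasDerivAt_eq_slope _ _ one_pos
    (fun t _ => (hderiv t).continuousAt.continuousWithinAt) (fun t _ => hderiv t)
  refine ⟨τ, hτ, ?_⟩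
  rw [hslope]
  simp only [zero_mul, one_mul, add_zero, add_sub_cancel, sub_zero, div_one]
  ring

lemma abs_sub_sub_sub_add_le (hs : Convex ℝ s) (hA : Differentiable ℝ A)
    (hA' : ∀ t ∈ s, |deriv A t| ≤ M₁)
    (hA'' : ∀ u ∈ s, ∀ v ∈ s, |deriv A u - deriv A v| ≤ M₂ * |u - v|) (hM₂ : 0 ≤ M₂)
    {a b c e : ℝ} (ha : a ∈ s) (hb : b ∈ s) (hc : c ∈ s) (he : e ∈ s) :
    |A e - A c - A b + A a| ≤
      M₁ * |e - c - b + a| + M₂ * (|c - a| + |e - c - b + a|) * |b - a| := by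
  obtain ⟨τ, hτ, hmvt⟩ := exists_sub_sub_sub_add_eq_deriv hA a b c e
  set u := c + τ * (e - c)
  set v := a + τ * (b - a)
  have hτ' : τ ∈ Icc (0 : ℝ) 1 := Ioo_subset_Icc_self hτ
  have hu : u ∈ s := hs.add_smul_sub_mem hc he hτ'
  have hv : v ∈ s := hs.add_smul_sub_mem ha hb hτ'
  have huv : |u - v| ≤ |c - a| + |e - c - b + a| :=
    calc |u - v| = |(c - a) + τ * (e - c - b + a)| := by simp only [u, v]; ring_nf
      _ ≤ |c - a| + |τ| * |e - c - b + a| := (abs_add_le _ _).trans_eq (by rw [abs_mul])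
      _ ≤ |c - a| + |e - c - b + a| := by
        gcongr
        exact mul_le_of_le_one_left (abs_nonneg _) (abs_le.mpr ⟨by linarith [hτ.1], hτ.2.le⟩)
  calc |A e - A c - A b + A a|
      = |deriv A u * (e - c - b + a) + (deriv A u - deriv A v) * (b - a)| := by
        rw [hmvt]; ring_nf
    _ ≤ |deriv A u| * |e - c - b + a| + |deriv A u - deriv A v| * |b - a| :=
      (abs_add_le _ _).trans_eq (by rw [abs_mul, abs_mul])
    _ ≤ M₁ * |e - c - b + a| + M₂ * (|c - a| + |e - c - b + a|) * |b - a| := by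
      gcongr
      · exact hA' u hu
      · exact (hA'' u hu v hv).trans (by gcongr)

end SecondDifference

namespace MixedHolderDyadic

variable {α C : ℝ} {f : ℝ → ℝ → ℝ}

lemma mono {C' : ℝ} (hf : MixedHolderDyadic α C f) (hCC' : C ≤ C') :
    MixedHolderDyadic α C' f := by
  intro x hx y hy x' hx' y' hy'
  obtain ⟨h₁, h₂, h₃⟩ := hf x hx y hy x' hx' y' hy'
  have hd₁ := Real.rpow_nonneg (dyadicDist_nonneg_s9 x y) α
  have hd₂ := Real.rpow_nonneg (dyadicDist_nonneg_s9 x' y') α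
  exact ⟨h₁.trans (by gcongr), h₂.trans (by gcongr), h₃.trans (by gcongr)⟩

lemma abs_sub_apply_one_one_le (hα : 0 ≤ α) (hC : 0 ≤ C) (hf : MixedHolderDyadic α C f)
    {x x' : ℝ} (hx : x ∈ Ioc (0 : ℝ) 1) (hx' : x' ∈ Ioc (0 : ℝ) 1) :
    |f x x' - f 1 1| ≤ 3 * C := by
  have hone : (1 : ℝ) ∈ Ioc (0 : ℝ) 1 := right_mem_Ioc.mpr one_pos
  obtain ⟨h₁, h₂, h₃⟩ := hf 1 hone x hx 1 hone x' hx'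
  have hd₁ := dyadicDist_rpow_le_one hα hone hx
  have hd₂ := dyadicDist_rpow_le_one hα hone hx'
  have hd₂' := Real.rpow_nonneg (dyadicDist_nonneg_s9 1 x') α
  have b₁ : |f x 1 - f 1 1| ≤ C := h₁.trans (mul_le_of_le_one_right hC hd₁)
  have b₂ : |f 1 x' - f 1 1| ≤ C := h₂.trans (mul_le_of_le_one_right hC hd₂)
  have b₃ : |f x x' - f 1 x' - f x 1 + f 1 1| ≤ C :=
    h₃.trans (mul_le_of_le_one_right hC (mul_le_one₀ hd₁ hd₂' hd₂))
  calc |f x x' - f 1 1|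
      = |(f x 1 - f 1 1) + (f 1 x' - f 1 1) + (f x x' - f 1 x' - f x 1 + f 1 1)| := by ring_nf
    _ ≤ |f x 1 - f 1 1| + |f 1 x' - f 1 1| + |f x x' - f 1 x' - f x 1 + f 1 1| :=
      abs_add_three _ _ _
    _ ≤ 3 * C := by linarith

lemma mem_Icc_sInf_sSup (hα : 0 ≤ α) (hC : 0 ≤ C) (hf : MixedHolderDyadic α C f)
    {x x' : ℝ} (hx : x ∈ Ioc (0 : ℝ) 1) (hx' : x' ∈ Ioc (0 : ℝ) 1) :
    f x x' ∈ Icc (sInf (image2 f (Ioc 0 1) (Ioc 0 1))) (sSup (image2 f (Ioc 0 1) (Ioc 0 1))) := by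
  have hbdd : image2 f (Ioc 0 1) (Ioc 0 1) ⊆ Icc (f 1 1 - 3 * C) (f 1 1 + 3 * C) := by
    rintro _ ⟨u, hu, v, hv, rfl⟩
    have := abs_le.mp (hf.abs_sub_apply_one_one_le hα hC hu hv)
    constructor <;> linarith
  exact ⟨csInf_le (bddBelow_Icc.mono hbdd) (mem_image2_of_mem hx hx'),
    le_csSup (bddAbove_Icc.mono hbdd) (mem_image2_of_mem hx hx')⟩

lemma comp {M₁ M₂ : ℝ} {A : ℝ → ℝ} {s : Set ℝ}
    (hα : 0 ≤ α) (hC : 0 ≤ C) (hf : MixedHolderDyadic α C f)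
    (hfs : ∀ x ∈ Ioc (0 : ℝ) 1, ∀ x' ∈ Ioc (0 : ℝ) 1, f x x' ∈ s) (hs : Convex ℝ s)
    (hA : Differentiable ℝ A) (hA' : ∀ t ∈ s, |deriv A t| ≤ M₁)
    (hA'' : ∀ u ∈ s, ∀ v ∈ s, |deriv A u - deriv A v| ≤ M₂ * |u - v|) (hM₂ : 0 ≤ M₂) :
    MixedHolderDyadic α (M₁ * C + 2 * M₂ * C ^ 2) (fun x x' => A (f x x')) := by
  intro x hx y hy x' hx' y' hy'
  obtain ⟨h₁, h₂, h₃⟩ := hf x hx y hy x' hx' y' hy'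
  have ha := hfs x hx x' hx'
  have hM₁ : 0 ≤ M₁ := (abs_nonneg _).trans (hA' _ ha)
  have hLip : ∀ u ∈ s, ∀ v ∈ s, |A v - A u| ≤ M₁ * |v - u| := fun u hu v hv =>
    hs.norm_image_sub_le_of_norm_deriv_le (fun t _ => hA t) hA' hu hv
  set D := dyadicDist x y ^ α
  set D' := dyadicDist x' y' ^ α
  have hD : 0 ≤ D := Real.rpow_nonneg (dyadicDist_nonneg_s9 x y) α
  have hD' : 0 ≤ D' := Real.rpow_nonneg (dyadicDist_nonneg_s9 x' y') α
  have hD₁ : D ≤ 1 := dyadicDist_rpow_le_one hα hx hy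
  refine ⟨?_, ?_, ?_⟩
  · calc |A (f y x') - A (f x x')| ≤ M₁ * (C * D) :=
          (hLip _ ha _ (hfs y hy x' hx')).trans (by gcongr)
      _ ≤ (M₁ * C + 2 * M₂ * C ^ 2) * D := by nlinarith [mul_nonneg hM₂ (sq_nonneg C)]
  · calc |A (f x y') - A (f x x')| ≤ M₁ * (C * D') :=
          (hLip _ ha _ (hfs x hx y' hy')).trans (by gcongr)
      _ ≤ (M₁ * C + 2 * M₂ * C ^ 2) * D' := by nlinarith [mul_nonneg hM₂ (sq_nonneg C)]
  · have hsum : |f x y' - f x x'| + |f y y' - f x y' - f y x' + f x x'| ≤ 2 * (C * D') := by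
      nlinarith [mul_le_mul_of_nonneg_left hD₁ (mul_nonneg hC hD')]
    calc |A (f y y') - A (f x y') - A (f y x') + A (f x x')|
        ≤ M₁ * |f y y' - f x y' - f y x' + f x x'|
          + M₂ * (|f x y' - f x x'| + |f y y' - f x y' - f y x' + f x x'|) * |f y x' - f x x'| :=
          abs_sub_sub_sub_add_le hs hA hA' hA'' hM₂ ha (hfs y hy x' hx') (hfs x hx y' hy')
            (hfs y hy y' hy')
      _ ≤ M₁ * (C * (D * D')) + M₂ * (2 * (C * D')) * (C * D) := by gcongr
      _ = (M₁ * C + 2 * M₂ * C ^ 2) * (D * D') := by ring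

end MixedHolderDyadic

/-- If `f` is mixed `α`-Hölder with constant `C` and `A` is `C²`, then `A ∘ f`
is mixed `α`-Hölder with constant `max(M₁ C, M₁ C + 2 M₂ C²)`, where `M₁` and `M₂` are the sups
of `|A'|` and `|A''|` on `[inf f, sup f]`. -/
theorem composition_mixed_holder
    (α C : ℝ) (hα : 0 < α) (hC : 0 < C)
    (f : ℝ → ℝ → ℝ) (hf : MixedHolderDyadic α C f)
    (A : ℝ → ℝ) (hA : ContDiff ℝ 2 A) :
    MixedHolderDyadic α
      (max
        (sSup ((fun t => |deriv A t|) ''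
            Set.Icc (sInf (Set.image2 f (Set.Ioc 0 1) (Set.Ioc 0 1)))
              (sSup (Set.image2 f (Set.Ioc 0 1) (Set.Ioc 0 1)))) * C)
        (sSup ((fun t => |deriv A t|) ''
            Set.Icc (sInf (Set.image2 f (Set.Ioc 0 1) (Set.Ioc 0 1)))
              (sSup (Set.image2 f (Set.Ioc 0 1) (Set.Ioc 0 1)))) * C
          + 2 * sSup ((fun t => |deriv (deriv A) t|) ''
              Set.Icc (sInf (Set.image2 f (Set.Ioc 0 1) (Set.Ioc 0 1)))
                (sSup (Set.image2 f (Set.Ioc 0 1) (Set.Ioc 0 1)))) * C ^ 2))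
      (fun x x' => A (f x x')) := by
  set I := Icc (sInf (image2 f (Ioc (0 : ℝ) 1) (Ioc 0 1))) (sSup (image2 f (Ioc 0 1) (Ioc 0 1)))
  have hA₁ : ContDiff ℝ 1 (deriv A) := (contDiff_succ_iff_deriv.mp (hA : ContDiff ℝ (1 + 1) A)).2.2
  have hfI : ∀ x ∈ Ioc (0 : ℝ) 1, ∀ x' ∈ Ioc (0 : ℝ) 1, f x x' ∈ I :=
    fun x hx x' hx' => hf.mem_Icc_sInf_sSup hα.le hC.le hx hx'
  have le_sSup_abs : ∀ g : ℝ → ℝ, Continuous g → ∀ t ∈ I, |g t| ≤ sSup ((fun t => |g t|) '' I) :=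
    fun g hg t ht => le_csSup (isCompact_Icc.bddAbove_image hg.abs.continuousOn) ⟨t, ht, rfl⟩
  have hbound₂ := le_sSup_abs _ (hA₁.continuous_deriv le_rfl)
  have hone : (1 : ℝ) ∈ Ioc (0 : ℝ) 1 := right_mem_Ioc.mpr one_pos
  have hM₂ := (abs_nonneg _).trans (hbound₂ _ (hfI 1 hone 1 hone))
  refine (hf.comp hα.le hC.le hfI (convex_Icc _ _)
    (hA.differentiable (by norm_num)) (le_sSup_abs _ hA₁.continuous) (fun u hu v hv => ?_) hM₂).mono
    (le_max_right _ _)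
  exact (convex_Icc _ _).norm_image_sub_le_of_norm_deriv_le
    (fun t _ => hA₁.differentiable one_ne_zero t) hbound₂ hv hu
end

section
/- Let α, C > 0 and let f : (0,1] → ℝ be integrable. Suppose that |(P^{j+1} f)(x) − (P^j f)(x)| ≤ C · 2^{-αj} for every j ∈ ℕ and every x ∈ (0,1], and that (P^j f)(x) → f(x) as j → ∞ for every x ∈ (0,1]. Then f is α-Hölder with respect to the dyadic metric d with constant 2C/(1 − 2^{-α}), i.e. |f(x) − f(y)| ≤ (2C/(1 − 2^{-α})) · d(x,y)^α for all x, y ∈ (0,1]. -/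
open MeasureTheory Set Filter

lemma ceil_half_eq (t : ℝ) : ⌈t⌉ = ⌈((⌈2 * t⌉ : ℤ) : ℝ) / 2⌉ := by
  set k : ℤ := ⌈2 * t⌉ with hk
  have h2 : 2 * t ≤ (k : ℝ) := by rw [hk]; exact Int.le_ceil _
  have ht1 : (⌈t⌉ : ℝ) - 1 < t := by linarith [Int.ceil_lt_add_one t]
  have hk2 : k ≤ 2 * ⌈t⌉ := by
    rw [hk]; exact Int.ceil_le.mpr (by push_cast; linarith [Int.le_ceil t])
  have hk2' : (k : ℝ) ≤ 2 * (⌈t⌉ : ℝ) := by exact_mod_cast hk2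
  symm
  rw [Int.ceil_eq_iff]
  constructor
  · linarith
  · linarith

lemma dyadicIndex_succ_eq {j : ℕ} {x y : ℝ}
    (h : dyadicIndex (j + 1) x = dyadicIndex (j + 1) y) :
    dyadicIndex j x = dyadicIndex j y := by
  unfold dyadicIndex at *
  have h' : ⌈(2:ℝ) ^ (j+1) * x⌉ = ⌈(2:ℝ) ^ (j+1) * y⌉ := by omega
  have hx : 2 * ((2:ℝ) ^ j * x) = (2:ℝ) ^ (j+1) * x := by ring
  have hy : 2 * ((2:ℝ) ^ j * y) = (2:ℝ) ^ (j+1) * y := by ring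
  have : ⌈(2:ℝ) ^ j * x⌉ = ⌈(2:ℝ) ^ j * y⌉ := by
    rw [ceil_half_eq ((2:ℝ) ^ j * x), ceil_half_eq ((2:ℝ) ^ j * y), hx, hy, h']
  omega

lemma dyadicIndex_anti {x y : ℝ} {i j : ℕ} (hij : i ≤ j)
    (h : dyadicIndex j x = dyadicIndex j y) : dyadicIndex i x = dyadicIndex i y := by
  induction j with
  | zero => simpa [Nat.le_zero.mp hij] using h
  | succ n ih =>
    rcases Nat.lt_or_ge i (n + 1) with hlt | hge
    · exact ih (Nat.lt_succ_iff.mp hlt) (dyadicIndex_succ_eq h)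
    · have : i = n + 1 := le_antisymm hij hge
      rwa [this]

lemma abs_lt_of_index_eq {x y : ℝ} {j : ℕ}
    (h : dyadicIndex j x = dyadicIndex j y) : |x - y| < (2:ℝ) ^ (-(j:ℤ)) := by
  unfold dyadicIndex at h
  have h' : ⌈(2:ℝ) ^ j * x⌉ = ⌈(2:ℝ) ^ j * y⌉ := by omega
  have hcast : ((⌈(2:ℝ) ^ j * x⌉ : ℤ) : ℝ) = ((⌈(2:ℝ) ^ j * y⌉ : ℤ) : ℝ) := by
    exact_mod_cast h'
  have hx1 : ((⌈(2:ℝ) ^ j * x⌉ : ℤ) : ℝ) - 1 < (2:ℝ) ^ j * x := by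
    linarith [Int.ceil_lt_add_one ((2:ℝ) ^ j * x)]
  have hx2 : (2:ℝ) ^ j * x ≤ ((⌈(2:ℝ) ^ j * x⌉ : ℤ) : ℝ) := Int.le_ceil _
  have hy1 : ((⌈(2:ℝ) ^ j * x⌉ : ℤ) : ℝ) - 1 < (2:ℝ) ^ j * y := by
    linarith [Int.ceil_lt_add_one ((2:ℝ) ^ j * y)]
  have hy2 : (2:ℝ) ^ j * y ≤ ((⌈(2:ℝ) ^ j * x⌉ : ℤ) : ℝ) := by
    rw [hcast]; exact Int.le_ceil _
  have hpow : (0:ℝ) < (2:ℝ) ^ j := by positivity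
  have habs : (2:ℝ) ^ j * |x - y| < 1 := by
    rw [← abs_of_pos hpow, ← abs_mul, mul_sub, abs_lt]
    constructor <;> linarith
  rw [zpow_neg, zpow_natCast, inv_eq_one_div, lt_div_iff₀ hpow]
  linarith [mul_comm ((2:ℝ) ^ j) |x - y|]

/-- Converse martingale characterization of dyadic Hölder regularity: if
`|(P^{j+1} f)(x) - (P^j f)(x)| ≤ C 2^{-αj}` for all `j` and all `x ∈ (0,1]`, and `P^j f → f`
pointwise on `(0,1]`, then `f` is `α`-Hölder with constant `2C/(1 - 2^{-α})` with respect to the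
dyadic metric. -/
theorem holder_from_martingale_differences
    (α C : ℝ) (hα : 0 < α) (hC : 0 < C)
    (f : ℝ → ℝ) (hint : MeasureTheory.IntegrableOn f (Set.Ioc (0:ℝ) 1))
    (hdiff : ∀ j : ℕ, ∀ x ∈ Set.Ioc (0:ℝ) 1,
      |dyadicAvg (j + 1) f x - dyadicAvg j f x| ≤ C * (2:ℝ) ^ (-(α * (j:ℝ))))
    (hconv : ∀ x ∈ Set.Ioc (0:ℝ) 1,
      Filter.Tendsto (fun j => dyadicAvg j f x) Filter.atTop (nhds (f x))) :
    ∀ x ∈ Set.Ioc (0:ℝ) 1, ∀ y ∈ Set.Ioc (0:ℝ) 1,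
      |f x - f y| ≤ (2 * C / (1 - (2:ℝ) ^ (-α))) * dyadicDist x y ^ α := by
  set r : ℝ := (2:ℝ) ^ (-α) with hr_def
  have hr0 : 0 < r := Real.rpow_pos_of_pos two_pos _
  have hr1 : r < 1 := Real.rpow_lt_one_of_one_lt_of_neg one_lt_two (by linarith)
  have hdiff' : ∀ j : ℕ, ∀ x ∈ Set.Ioc (0:ℝ) 1,
      |dyadicAvg (j + 1) f x - dyadicAvg j f x| ≤ C * r ^ j := by
    intro j x hx
    have : (2:ℝ) ^ (-(α * (j:ℝ))) = r ^ j := by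
      rw [hr_def, ← Real.rpow_natCast ((2:ℝ) ^ (-α)) j, ← Real.rpow_mul (by norm_num)]
      congr 1; ring
    rw [← this]
    exact hdiff j x hx
  -- telescoping estimate
  have hkey : ∀ J : ℕ, ∀ x ∈ Set.Ioc (0:ℝ) 1,
      |f x - dyadicAvg J f x| ≤ C / (1 - r) * r ^ J := by
    intro J x hx
    set a : ℕ → ℝ := fun n => dyadicAvg n f x with ha
    have htele : ∀ N : ℕ, J ≤ N → |a N - a J| ≤ C / (1 - r) * r ^ J := by
      intro N hJN
      have hsum : ∑ i ∈ Finset.Ico J N, (a (i + 1) - a i) = a N - a J := by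
        rw [Finset.sum_Ico_eq_sub _ hJN, Finset.sum_range_sub, Finset.sum_range_sub]
        ring
      calc |a N - a J| = |∑ i ∈ Finset.Ico J N, (a (i + 1) - a i)| := by rw [hsum]
        _ ≤ ∑ i ∈ Finset.Ico J N, |a (i + 1) - a i| := Finset.abs_sum_le_sum_abs _ _
        _ ≤ ∑ i ∈ Finset.Ico J N, C * r ^ i :=
            Finset.sum_le_sum fun i _ => hdiff' i x hx
        _ = C * ∑ i ∈ Finset.Ico J N, r ^ i := by rw [Finset.mul_sum]
        _ ≤ C * (r ^ J / (1 - r)) := by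
            exact mul_le_mul_of_nonneg_left
              (geom_sum_Ico_le_of_lt_one hr0.le hr1) hC.le
        _ = C / (1 - r) * r ^ J := by ring
    have hlim : Tendsto (fun N => |a N - a J|) atTop (nhds |f x - a J|) :=
      ((hconv x hx).sub_const (a J)).abs
    exact le_of_tendsto hlim (Filter.eventually_atTop.mpr ⟨J, htele⟩)
  intro x hx y hy
  by_cases hxy : x = y
  · subst hxy
    have : dyadicDist x x = 0 := by unfold dyadicDist; rw [if_pos rfl]
    rw [this, Real.zero_rpow hα.ne', mul_zero, sub_self, abs_zero]
  · set A : Set ℕ := {j : ℕ | dyadicIndex j x = dyadicIndex j y} with hA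
    have h0A : 0 ∈ A := by
      have hcx : ⌈x⌉ = 1 := by
        rw [Int.ceil_eq_iff]
        constructor
        · simpa using hx.1
        · simpa using hx.2
      have hcy : ⌈y⌉ = 1 := by
        rw [Int.ceil_eq_iff]
        constructor
        · simpa using hy.1
        · simpa using hy.2
      simp only [hA, Set.mem_setOf_eq]
      unfold dyadicIndex
      simp [hcx, hcy]
    have hbdd : BddAbove A := by
      have hpos : 0 < |x - y| := abs_pos.mpr (sub_ne_zero.mpr hxy)
      obtain ⟨N, hN⟩ := exists_pow_lt_of_lt_one hpos (by norm_num : (1/2 : ℝ) < 1)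
      refine ⟨N, fun j hj => ?_⟩
      by_contra hcon
      push_neg at hcon
      have hlt : |x - y| < (2:ℝ) ^ (-(j:ℤ)) := abs_lt_of_index_eq hj
      have hmono : (2:ℝ) ^ (-(j:ℤ)) ≤ (2:ℝ) ^ (-(N:ℤ)) :=
        zpow_le_zpow_right₀ one_le_two (by exact_mod_cast neg_le_neg (by exact_mod_cast hcon.le))
      have hNeq : (2:ℝ) ^ (-(N:ℤ)) = (1/2 : ℝ) ^ N := by
        rw [zpow_neg, zpow_natCast, one_div, inv_pow]
      linarith [hN, hlt, hmono, hNeq ▸ hmono]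
    set J : ℕ := sSup A with hJ
    have hJA : J ∈ A := Nat.sSup_mem ⟨0, h0A⟩ hbdd
    have hle : ∀ j ∈ A, j ≤ J := fun j hj => le_csSup hbdd hj
    -- the distance equals 2^{-J}
    have hdist : dyadicDist x y = (2:ℝ) ^ (-(J:ℤ)) := by
      unfold dyadicDist
      rw [if_neg hxy]
      apply le_antisymm
      · apply csInf_le
        · refine ⟨0, fun s hs => ?_⟩
          obtain ⟨j, rfl, _⟩ := hs
          positivity
        · exact ⟨J, rfl, hJA⟩
      · refine le_csInf ⟨1, ⟨0, by norm_num, h0A⟩⟩ ?_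
        rintro s ⟨j, rfl, hj⟩
        exact zpow_le_zpow_right₀ one_le_two
          (by exact_mod_cast neg_le_neg (by exact_mod_cast hle j hj))
    -- equal averages at scale J
    have hsame : dyadicAvg J f x = dyadicAvg J f y := by
      unfold dyadicAvg
      rw [show dyadicIndex J x = dyadicIndex J y from hJA]
    have hbx := hkey J x hx
    have hby := hkey J y hy
    have hpowJ : ((2:ℝ) ^ (-(J:ℤ))) ^ α = r ^ J := by
      rw [hr_def, ← Real.rpow_intCast 2 (-(J:ℤ)), ← Real.rpow_natCast ((2:ℝ) ^ (-α)) J,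
        ← Real.rpow_mul (by norm_num), ← Real.rpow_mul (by norm_num)]
      congr 1; push_cast; ring
    rw [hdist, hpowJ]
    have : |f x - f y| ≤ |f x - dyadicAvg J f x| + |f y - dyadicAvg J f y| := by
      rw [hsame] at *
      calc |f x - f y| = |(f x - dyadicAvg J f y) - (f y - dyadicAvg J f y)| := by ring_nf
        _ ≤ |f x - dyadicAvg J f y| + |f y - dyadicAvg J f y| := abs_sub _ _
    calc |f x - f y| ≤ |f x - dyadicAvg J f x| + |f y - dyadicAvg J f y| := this
      _ ≤ C / (1 - r) * r ^ J + C / (1 - r) * r ^ J := add_le_add hbx hby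
      _ = 2 * C / (1 - r) * r ^ J := by ring
end
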